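/- arXiv:1212.5006 — 7 statements merged into one kernel-verified Lean document; each statement's English description precedes it below -/
import Mathlib

section
/- Let n ≥ 3 be an integer and let L be the subgroup of (ℚ/ℤ)^4 generated by v = (\frac{n-1}{n(n-2)}, \frac{1}{n(n-2)}, 0, \frac{-1}{n-2}), w = (\frac{1}{n(n-2)}, \frac{n-1}{n(n-2)}, 0, \frac{-1}{n-2}), and u = (\frac{1}{(n-1)(n-2)}, \frac{1}{(n-1)(n-2)}, \frac{1}{n-1}, \frac{-n}{(n-1)(n-2)}). Then the cardinality of L is n(n-1)(n-2). -/
/-!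
With `M = n(n-1)(n-2)`, the element `g = v - u` has coordinates `(n² - 3n + 1, -1, -n(n-2), n) / M`
in `ℚ/ℤ`, and `v = (1-n)g`, `w = -(n-1)²g`, `u = -ng`; so `L` is the cyclic group generated by `g`.
Since `M • g = 0` and the coordinate `-1/M` of `g` already has order `M`, `|L| = M`.
-/

namespace AddCircle

theorem coe_eq_coe_of_sub_eq_intCast_mul {R : Type*} [Ring R] {p x y : R} (m : ℤ)
    (h : x - y = m * p) : (x : AddCircle p) = y := by
  rw [← sub_eq_zero, ← coe_sub, coe_eq_zero_iff]
  exact ⟨m, by rw [h, zsmul_eq_mul]⟩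

theorem zsmul_coe_eq_coe {R : Type*} [Ring R] {p x y : R} (k m : ℤ) (h : k * x - y = m * p) :
    k • (x : AddCircle p) = y := by
  rw [← coe_zsmul, zsmul_eq_mul]
  exact coe_eq_coe_of_sub_eq_intCast_mul m h

end AddCircle

theorem addOrderOf_pi_eq_of_nsmul_eq_zero {ι : Type*} {G : ι → Type*} [∀ i, AddMonoid (G i)]
    {f : ∀ i, G i} {M : ℕ} (hM : M • f = 0) (i : ι) (hi : addOrderOf (f i) = M) :
    addOrderOf f = M :=
  Nat.dvd_antisymm (addOrderOf_dvd_of_nsmul_eq_zero hM) (hi ▸ addOrderOf_apply_dvd_addOrderOf i)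

theorem AddSubgroup.closure_eq_zmultiples_of_subset {G : Type*} [AddGroup G] {s : Set G} {g : G}
    (hs : s ⊆ zmultiples g) (hg : g ∈ closure s) : closure s = zmultiples g :=
  le_antisymm ((closure_le _).2 hs) (zmultiples_le.2 hg)

local notation "𝕋" => AddCircle (1 : ℚ)

section Delsarte

variable (n : ℕ)

def delsarteV : Fin 4 → 𝕋 :=
  ![(((n - 1) / (n * (n - 2)) : ℚ) : 𝕋), ((1 / (n * (n - 2)) : ℚ) : 𝕋), (((0 : ℚ)) : 𝕋),
    (((-1) / (n - 2) : ℚ) : 𝕋)]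

def delsarteW : Fin 4 → 𝕋 :=
  ![((1 / (n * (n - 2)) : ℚ) : 𝕋), (((n - 1) / (n * (n - 2)) : ℚ) : 𝕋), (((0 : ℚ)) : 𝕋),
    (((-1) / (n - 2) : ℚ) : 𝕋)]

def delsarteU : Fin 4 → 𝕋 :=
  ![((1 / ((n - 1) * (n - 2)) : ℚ) : 𝕋), ((1 / ((n - 1) * (n - 2)) : ℚ) : 𝕋),
    ((1 / (n - 1) : ℚ) : 𝕋), (((-n) / ((n - 1) * (n - 2)) : ℚ) : 𝕋)]

def delsarteGen : Fin 4 → 𝕋 :=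
  let M : ℚ := (n * (n - 1) * (n - 2) : ℕ)
  ![(((n ^ 2 - 3 * n + 1) / M : ℚ) : 𝕋), ((-1 / M : ℚ) : 𝕋), ((-(n * (n - 2)) / M : ℚ) : 𝕋),
    ((n / M : ℚ) : 𝕋)]

variable {n}

theorem cast_delsarte_order (hn : 2 ≤ n) :
    ((n * (n - 1) * (n - 2) : ℕ) : ℚ) = n * (n - 1) * (n - 2) := by
  push_cast [Nat.cast_sub (by omega : 1 ≤ n), Nat.cast_sub hn]
  rfl

theorem delsarte_denominators_ne_zero (hn : 3 ≤ n) :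
    (n : ℚ) ≠ 0 ∧ (n : ℚ) - 1 ≠ 0 ∧ (n : ℚ) - 2 ≠ 0 :=
  ⟨by norm_cast; omega, sub_ne_zero.2 (by norm_cast; omega), sub_ne_zero.2 (by norm_cast; omega)⟩

theorem delsarteV_eq_zsmul (hn : 3 ≤ n) : delsarteV n = ((1 : ℤ) - n) • delsarteGen n := by
  obtain ⟨h0, h1, h2⟩ := delsarte_denominators_ne_zero hn
  simp only [delsarteV, delsarteGen, cast_delsarte_order (by omega : 2 ≤ n), Matrix.smul_cons,
    Matrix.smul_empty, Matrix.vecCons_inj, and_true]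
  refine ⟨(AddCircle.zsmul_coe_eq_coe _ (-1) ?_).symm, (AddCircle.zsmul_coe_eq_coe _ 0 ?_).symm,
    (AddCircle.zsmul_coe_eq_coe _ 1 ?_).symm, (AddCircle.zsmul_coe_eq_coe _ 0 ?_).symm⟩ <;>
  push_cast <;> field_simp <;> ring

theorem delsarteW_eq_zsmul (hn : 3 ≤ n) : delsarteW n = (-((n : ℤ) - 1) ^ 2) • delsarteGen n := by
  obtain ⟨h0, h1, h2⟩ := delsarte_denominators_ne_zero hn
  simp only [delsarteW, delsarteGen, cast_delsarte_order (by omega : 2 ≤ n), Matrix.smul_cons,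
    Matrix.smul_empty, Matrix.vecCons_inj, and_true]
  refine ⟨(AddCircle.zsmul_coe_eq_coe _ (2 - n) ?_).symm, (AddCircle.zsmul_coe_eq_coe _ 0 ?_).symm,
    (AddCircle.zsmul_coe_eq_coe _ (n - 1) ?_).symm,
    (AddCircle.zsmul_coe_eq_coe _ (-1) ?_).symm⟩ <;>
  push_cast <;> field_simp <;> ring

theorem delsarteU_eq_zsmul (hn : 3 ≤ n) : delsarteU n = (-(n : ℤ)) • delsarteGen n := by
  obtain ⟨h0, h1, h2⟩ := delsarte_denominators_ne_zero hn
  simp only [delsarteU, delsarteGen, cast_delsarte_order (by omega : 2 ≤ n), Matrix.smul_cons,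
    Matrix.smul_empty, Matrix.vecCons_inj, and_true]
  refine ⟨(AddCircle.zsmul_coe_eq_coe _ (-1) ?_).symm, (AddCircle.zsmul_coe_eq_coe _ 0 ?_).symm,
    (AddCircle.zsmul_coe_eq_coe _ 1 ?_).symm, (AddCircle.zsmul_coe_eq_coe _ 0 ?_).symm⟩ <;>
  push_cast <;> field_simp <;> ring

theorem nsmul_delsarteGen (hn : 3 ≤ n) : (n * (n - 1) * (n - 2)) • delsarteGen n = 0 := by
  obtain ⟨h0, h1, h2⟩ := delsarte_denominators_ne_zero hn
  rw [← natCast_zsmul]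
  simp only [delsarteGen, cast_delsarte_order (by omega : 2 ≤ n), Matrix.smul_cons,
    Matrix.smul_empty, Matrix.cons_eq_zero_iff, Matrix.zero_empty, and_true]
  refine ⟨AddCircle.zsmul_coe_eq_coe _ (n ^ 2 - 3 * n + 1) ?_, AddCircle.zsmul_coe_eq_coe _ (-1) ?_,
    AddCircle.zsmul_coe_eq_coe _ (-(n * (n - 2))) ?_, AddCircle.zsmul_coe_eq_coe _ n ?_⟩ <;>
  push_cast [Nat.cast_sub (by omega : 1 ≤ n), Nat.cast_sub (by omega : 2 ≤ n)] <;> field_simp <;>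
  ring

theorem addOrderOf_delsarteGen_one (hn : 3 ≤ n) :
    addOrderOf (delsarteGen n 1) = n * (n - 1) * (n - 2) := by
  have : Fact ((0 : ℚ) < 1) := ⟨one_pos⟩
  have hM : 0 < n * (n - 1) * (n - 2) := Nat.mul_pos (Nat.mul_pos (by omega) (by omega)) (by omega)
  simpa only [delsarteGen, Matrix.cons_val_one, Matrix.cons_val_zero, Matrix.head_cons,
    Int.cast_neg, Int.cast_one, mul_one] using
    AddCircle.addOrderOf_div_of_gcd_eq_one' (p := (1 : ℚ)) (m := -1) hM (by simp)

end Delsarte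

/-- The subgroup `L ⊆ (ℚ/ℤ)⁴` generated by the vectors `v, w, u` associated to the
Delsarte surface `Xⁿ + Yⁿ + Zⁿ⁻¹U + XYUⁿ⁻²` has exactly `n(n-1)(n-2)` elements. -/
theorem card_L (n : ℕ) (hn : 3 ≤ n)
    (v w u : Fin 4 → AddCircle (1 : ℚ))
    (hv : v = ![(((n - 1) / (n * (n - 2)) : ℚ) : AddCircle (1 : ℚ)),
      ((1 / (n * (n - 2)) : ℚ) : AddCircle (1 : ℚ)), (((0 : ℚ)) : AddCircle (1 : ℚ)),
      (((-1) / (n - 2) : ℚ) : AddCircle (1 : ℚ))])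
    (hw : w = ![((1 / (n * (n - 2)) : ℚ) : AddCircle (1 : ℚ)),
      (((n - 1) / (n * (n - 2)) : ℚ) : AddCircle (1 : ℚ)), (((0 : ℚ)) : AddCircle (1 : ℚ)),
      (((-1) / (n - 2) : ℚ) : AddCircle (1 : ℚ))])
    (hu : u = ![((1 / ((n - 1) * (n - 2)) : ℚ) : AddCircle (1 : ℚ)),
      ((1 / ((n - 1) * (n - 2)) : ℚ) : AddCircle (1 : ℚ)),
      ((1 / (n - 1) : ℚ) : AddCircle (1 : ℚ)),
      (((-n) / ((n - 1) * (n - 2)) : ℚ) : AddCircle (1 : ℚ))]) :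
    Nat.card (AddSubgroup.closure ({v, w, u} : Set (Fin 4 → AddCircle (1 : ℚ)))) =
      n * (n - 1) * (n - 2) := by
  obtain rfl : v = delsarteV n := hv
  obtain rfl : w = delsarteW n := hw
  obtain rfl : u = delsarteU n := hu
  have hgen : delsarteGen n = delsarteV n - delsarteU n := by
    rw [delsarteV_eq_zsmul hn, delsarteU_eq_zsmul hn]
    module
  have hL : AddSubgroup.closure {delsarteV n, delsarteW n, delsarteU n} =
      AddSubgroup.zmultiples (delsarteGen n) := by
    refine AddSubgroup.closure_eq_zmultiples_of_subset ?_ ?_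
    · rintro _ (rfl | rfl | rfl)
      exacts [⟨_, (delsarteV_eq_zsmul hn).symm⟩, ⟨_, (delsarteW_eq_zsmul hn).symm⟩,
        ⟨_, (delsarteU_eq_zsmul hn).symm⟩]
    · rw [hgen]
      exact sub_mem (AddSubgroup.subset_closure (by simp)) (AddSubgroup.subset_closure (by simp))
  rw [hL, Nat.card_zmultiples]
  exact addOrderOf_pi_eq_of_nsmul_eq_zero (nsmul_delsarteGen hn) 1 (addOrderOf_delsarteGen_one hn)
end

section
/- With L as above (n ≥ 3), let L_0 = { (x_1,x_2,x_3,x_4) ∈ L : x_i = 0 for some i }. Then #L_0 = n(n-2). -/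
/-!
Write `v = V / (n(n-2))` and `u = U / ((n-1)(n-2))` with integer vectors `V = (n-1, 1, 0, -n)`
and `U = (1, 1, n-2, -n)`. Then `w = (n-1) v` and `(n-1) u = n v`, so `L = ⟨v, u⟩`, and
`⟨v⟩ ⊆ L₀` because the third coordinate of `v` vanishes. Conversely, if the `i`-th coordinate
of `a v + c u` vanishes, clearing the common denominator `n(n-1)(n-2)` shows that `n - 1`
divides `c · n · Uᵢ`; as `n · Uᵢ` is a unit modulo `n - 1`, we get `n - 1 ∣ c`, and then
`a v + c u ∈ ⟨v⟩`. Hence `L₀ = ⟨v⟩`, a cyclic group of order `n(n-2)` since the second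
coordinate of `v` is `1 / (n(n-2))`.
-/

open AddSubgroup

def intDivCoe (D : ℤ) : ℤ →+ AddCircle (1 : ℚ) :=
  AddMonoidHom.mk' (fun k => ((k / D : ℚ) : AddCircle (1 : ℚ))) fun a b => by
    rw [Int.cast_add, add_div, AddCircle.coe_add]

theorem intDivCoe_apply (D k : ℤ) : intDivCoe D k = ((k / D : ℚ) : AddCircle (1 : ℚ)) := rfl

theorem intDivCoe_eq_zero_iff {D : ℤ} (hD : D ≠ 0) (k : ℤ) : intDivCoe D k = 0 ↔ D ∣ k := by
  rw [intDivCoe_apply, AddCircle.coe_eq_zero_iff]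
  constructor
  · rintro ⟨m, hm⟩
    rw [zsmul_eq_mul, mul_one] at hm
    have hk : (k : ℚ) = D * m := by
      rw [hm]
      field_simp
    exact ⟨m, by exact_mod_cast hk⟩
  · rintro ⟨m, rfl⟩
    exact ⟨m, by rw [zsmul_eq_mul, mul_one]; push_cast; field_simp⟩

theorem intDivCoe_mul_mul_left {m : ℤ} (hm : m ≠ 0) (D k : ℤ) :
    intDivCoe (m * D) (m * k) = intDivCoe D k := by
  rw [intDivCoe_apply, intDivCoe_apply, Int.cast_mul, Int.cast_mul, mul_div_mul_left]
  exact_mod_cast hm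

section

variable {ι : Type*}

def piDivCoe (D : ℤ) : (ι → ℤ) →+ (ι → AddCircle (1 : ℚ)) :=
  AddMonoidHom.compLeft (intDivCoe D) ι

theorem piDivCoe_apply (D : ℤ) (x : ι → ℤ) (i : ι) : piDivCoe D x i = intDivCoe D (x i) := rfl

theorem piDivCoe_eq_zero_iff {D : ℤ} (hD : D ≠ 0) (x : ι → ℤ) :
    piDivCoe D x = 0 ↔ ∀ i, D ∣ x i := by
  simp only [funext_iff, piDivCoe_apply, Pi.zero_apply, intDivCoe_eq_zero_iff hD]

theorem piDivCoe_eq_iff {D : ℤ} (hD : D ≠ 0) (x y : ι → ℤ) :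
    piDivCoe D x = piDivCoe D y ↔ ∀ i, D ∣ x i - y i := by
  rw [← sub_eq_zero, ← map_sub, piDivCoe_eq_zero_iff hD]
  rfl

theorem piDivCoe_mul_smul_left {m : ℤ} (hm : m ≠ 0) (D : ℤ) (x : ι → ℤ) :
    piDivCoe (m * D) (m • x) = piDivCoe D x :=
  funext fun i => intDivCoe_mul_mul_left hm D (x i)

theorem addOrderOf_piDivCoe {D : ℤ} (hD : D ≠ 0) {x : ι → ℤ} {j : ι}
    (hj : IsCoprime (x j) D) : addOrderOf (piDivCoe D x) = D.natAbs := by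
  apply Nat.dvd_antisymm
  · apply addOrderOf_dvd_of_nsmul_eq_zero
    rw [← natCast_zsmul, Int.natCast_natAbs, ← map_zsmul, piDivCoe_eq_zero_iff hD]
    exact fun i => ((dvd_abs D D).mpr dvd_rfl).mul_right (x i)
  · have h := congrFun (addOrderOf_nsmul_eq_zero (piDivCoe D x)) j
    rw [Pi.smul_apply, Pi.zero_apply, piDivCoe_apply, ← map_nsmul, intDivCoe_eq_zero_iff hD,
      nsmul_eq_mul] at h
    exact Int.natAbs_dvd_natAbs.mpr (hj.symm.dvd_of_dvd_mul_right h)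

end

theorem AddSubgroup.mem_closure_triple_zsmul {G : Type*} [AddCommGroup G] {v u x : G} (k : ℤ) :
    x ∈ closure {v, k • v, u} ↔ ∃ a c : ℤ, a • v + c • u = x := by
  rw [← mem_closure_pair]
  suffices closure {v, k • v, u} = closure ({v, u} : Set G) by rw [this]
  apply le_antisymm
  · rw [closure_le]
    rintro _ (rfl | rfl | rfl)
    · exact subset_closure (by simp)
    · exact zsmul_mem (subset_closure (by simp)) k
    · exact subset_closure (by simp)
  · exact closure_mono (by intro; simp only [Set.mem_insert_iff, Set.mem_singleton_iff]; tauto)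

def numV (n : ℤ) : Fin 4 → ℤ := ![n - 1, 1, 0, -n]

def numU (n : ℤ) : Fin 4 → ℤ := ![1, 1, n - 2, -n]

def genV (n : ℤ) : Fin 4 → AddCircle (1 : ℚ) := piDivCoe (n * (n - 2)) (numV n)

def genU (n : ℤ) : Fin 4 → AddCircle (1 : ℚ) := piDivCoe ((n - 1) * (n - 2)) (numU n)

section

variable {n : ℤ}

theorem isCoprime_sub_one_numU (i : Fin 4) : IsCoprime (n - 1) (numU n i) := by
  fin_cases i
  · exact isCoprime_one_right
  · exact isCoprime_one_right
  · exact ⟨1, -1, by simp [numU]⟩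
  · exact ⟨-1, -1, by simp [numU]⟩

theorem piDivCoe_eq_sub_one_zsmul_genV (hn : 3 ≤ n) :
    piDivCoe (n * (n - 2)) ![1, n - 1, 0, -n] = (n - 1) • genV n := by
  rw [genV, ← map_zsmul, piDivCoe_eq_iff (by nlinarith)]
  intro i
  fin_cases i
  · exact ⟨-1, show 1 - (n - 1) * (n - 1) = n * (n - 2) * -1 by ring⟩
  · exact ⟨0, show n - 1 - (n - 1) * 1 = n * (n - 2) * 0 by ring⟩
  · exact ⟨0, show 0 - (n - 1) * 0 = n * (n - 2) * 0 by ring⟩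
  · exact ⟨1, show -n - (n - 1) * -n = n * (n - 2) * 1 by ring⟩

theorem sub_one_zsmul_genU (hn : 3 ≤ n) : (n - 1) • genU n = n • genV n := by
  rw [genU, genV, ← map_zsmul, ← map_zsmul, piDivCoe_mul_smul_left (by omega),
    piDivCoe_mul_smul_left (by omega), piDivCoe_eq_iff (by omega)]
  intro i
  fin_cases i
  · exact ⟨-1, show 1 - (n - 1) = (n - 2) * -1 by ring⟩
  · exact ⟨0, show 1 - 1 = (n - 2) * 0 by ring⟩
  · exact ⟨1, show n - 2 - 0 = (n - 2) * 1 by ring⟩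
  · exact ⟨0, show -n - -n = (n - 2) * 0 by ring⟩

theorem sub_one_dvd_of_apply_eq_zero (hn : 3 ≤ n) {a c : ℤ} {i : Fin 4}
    (h : (a • genV n + c • genU n) i = 0) : n - 1 ∣ c := by
  have hv : genV n = piDivCoe (n * ((n - 1) * (n - 2))) ((n - 1) • numV n) := by
    rw [genV, ← piDivCoe_mul_smul_left (m := n - 1) (by omega), mul_left_comm]
  have hu : genU n = piDivCoe (n * ((n - 1) * (n - 2))) (n • numU n) :=
    (piDivCoe_mul_smul_left (by omega) _ _).symm
  rw [hv, hu, ← map_zsmul, ← map_zsmul, ← map_add, piDivCoe_apply,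
    intDivCoe_eq_zero_iff (mul_pos (by omega) (mul_pos (by omega) (by omega))).ne'] at h
  have hdvd : n - 1 ∣ a * ((n - 1) * numV n i) + c * (n * numU n i) := by
    refine (Dvd.intro (n * (n - 2)) ?_).trans (by simpa using h)
    ring
  rw [dvd_add_right (dvd_mul_of_dvd_right (dvd_mul_right _ _) _)] at hdvd
  exact ((isCoprime_sub_one_numU i).mul_right ⟨-1, 1, by ring⟩).dvd_of_dvd_mul_right
    (by rwa [mul_comm (numU n i)])

theorem setOf_mem_closure_and_exists_eq_zero (hn : 3 ≤ n) :
    {x : Fin 4 → AddCircle (1 : ℚ) |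
      x ∈ AddSubgroup.closure {genV n, (n - 1) • genV n, genU n} ∧ ∃ i, x i = 0} =
      zmultiples (genV n) := by
  ext x
  constructor
  · rintro ⟨hx, i, hxi⟩
    obtain ⟨a, c, rfl⟩ := (mem_closure_triple_zsmul _).mp hx
    obtain ⟨c, rfl⟩ := sub_one_dvd_of_apply_eq_zero hn hxi
    refine mem_zmultiples_iff.mpr ⟨a + c * n, ?_⟩
    rw [mul_comm (n - 1), mul_zsmul, sub_one_zsmul_genU hn, ← mul_zsmul, add_zsmul]
  · rintro ⟨k, rfl⟩
    refine ⟨zsmul_mem (subset_closure (by simp)) k, 2, ?_⟩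
    simp [genV, piDivCoe_apply, numV]

end

/-- The subset `L₀` of elements of `L` having at least one coordinate equal to `0` in
`ℚ/ℤ` has exactly `n(n-2)` elements. -/
theorem card_L0 (n : ℕ) (hn : 3 ≤ n)
    (v w u : Fin 4 → AddCircle (1 : ℚ))
    (hv : v = ![(((n - 1) / (n * (n - 2)) : ℚ) : AddCircle (1 : ℚ)),
      ((1 / (n * (n - 2)) : ℚ) : AddCircle (1 : ℚ)), (((0 : ℚ)) : AddCircle (1 : ℚ)),
      (((-1) / (n - 2) : ℚ) : AddCircle (1 : ℚ))])
    (hw : w = ![((1 / (n * (n - 2)) : ℚ) : AddCircle (1 : ℚ)),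
      (((n - 1) / (n * (n - 2)) : ℚ) : AddCircle (1 : ℚ)), (((0 : ℚ)) : AddCircle (1 : ℚ)),
      (((-1) / (n - 2) : ℚ) : AddCircle (1 : ℚ))])
    (hu : u = ![((1 / ((n - 1) * (n - 2)) : ℚ) : AddCircle (1 : ℚ)),
      ((1 / ((n - 1) * (n - 2)) : ℚ) : AddCircle (1 : ℚ)),
      ((1 / (n - 1) : ℚ) : AddCircle (1 : ℚ)),
      (((-n) / ((n - 1) * (n - 2)) : ℚ) : AddCircle (1 : ℚ))]) :
    Nat.card {x : Fin 4 → AddCircle (1 : ℚ) |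
      x ∈ AddSubgroup.closure ({v, w, u} : Set (Fin 4 → AddCircle (1 : ℚ))) ∧
      ∃ i, x i = 0} = n * (n - 2) := by
  have hnℤ : (3 : ℤ) ≤ n := by exact_mod_cast hn
  have hn2 : (n : ℚ) - 2 ≠ 0 := by
    rw [sub_ne_zero]
    exact_mod_cast (by omega : n ≠ 2)
  have hv' : v = genV n := by
    subst hv
    funext i
    fin_cases i <;> simp [genV, numV, piDivCoe_apply, intDivCoe_apply]
    congr 1
    field_simp
  have hu' : u = genU n := by
    subst hu
    funext i
    fin_cases i <;> simp [genU, numU, piDivCoe_apply, intDivCoe_apply]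
    congr 1
    field_simp
  have hw' : w = ((n : ℤ) - 1) • v := by
    rw [hv', ← piDivCoe_eq_sub_one_zsmul_genV hnℤ]
    subst hw
    funext i
    fin_cases i <;> simp [piDivCoe_apply, intDivCoe_apply]
    congr 1
    field_simp
  rw [hw', hv', hu', setOf_mem_closure_and_exists_eq_zero hnℤ, SetLike.coe_sort_coe,
    Nat.card_zmultiples, genV, addOrderOf_piDivCoe (j := 1) (mul_ne_zero (by omega) (by omega))
    isCoprime_one_left, Int.natAbs_mul, Int.natAbs_natCast]
  congr
  omega
end

section
/- Let n ≥ 3 and consider a ∈ ℚ/ℤ. The vector (k,l,m) = (a, 1/2 + a, 1/2 + 2a) · B, where B is the integer matrix with rows (n-1,-1,0), (-1,n-1,0), (-1,-1,n-1), has all entries in ℤ if and only if either (a = 1/4 or a = 3/4, and n ≡ 0 mod 4) or (a ∈ {1/12, 5/12, 7/12, 11/12} and n ≡ 4 mod 12). -/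
/-!
Writing the three entries out, `k = (n - 4) a - 1`, `l = (n - 4) a + n/2 - 1` and
`2 m = (n - 1)(1 + 4 a)`, one finds `2 m - 4 k = n + 3 + 12 a`, so integrality forces
`a = t / 12` with `t ∈ [0, 12)` an integer. For `a = t / 12` the three integrality conditions
are congruences in `n` and `t` modulo `12`, and running through the twelve values of `t`
leaves exactly the listed cases.
-/

theorem exists_intCast_eq_div_iff_dvd {x d : ℤ} (hd : d ≠ 0) :
    (∃ z : ℤ, (z : ℚ) = x / d) ↔ d ∣ x := by
  constructor
  · rintro ⟨z, hz⟩
    rw [eq_div_iff (by exact_mod_cast hd)] at hz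
    exact ⟨z, by rw [mul_comm]; exact_mod_cast hz.symm⟩
  · rintro ⟨z, rfl⟩
    exact ⟨z, by push_cast; field_simp⟩

theorem exists_eq_intCast_div_twelve {n : ℕ} {a : ℚ}
    (hk : ∃ k : ℤ, (k : ℚ) = (n - 1) * a - (1/2 + a) - (1/2 + 2*a))
    (hm : ∃ m : ℤ, (m : ℚ) = (n - 1) * (1/2 + 2*a)) :
    ∃ t : ℤ, a = t / 12 := by
  obtain ⟨k, hk⟩ := hk
  obtain ⟨m, hm⟩ := hm
  exact ⟨2*m - 4*k - n - 3, by push_cast; linear_combination (-2 * hm + 4 * hk) / 12⟩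

theorem integral_iff_dvd (n : ℕ) (t : ℤ) :
    ((∃ k : ℤ, (k : ℚ) = (n - 1) * (t/12) - (1/2 + t/12) - (1/2 + 2*(t/12))) ∧
     (∃ l : ℤ, (l : ℚ) = -(t/12) + (n - 1) * (1/2 + t/12) - (1/2 + 2*(t/12))) ∧
     (∃ m : ℤ, (m : ℚ) = (n - 1) * (1/2 + 2*(t/12)))) ↔
    (12 ∣ (n - 4) * t - 12 ∧ 12 ∣ (n - 4) * t + 6 * n - 12 ∧ 6 ∣ (n - 1) * (t + 3)) := by
  have hk : (n - 1) * ((t : ℚ)/12) - (1/2 + t/12) - (1/2 + 2*(t/12))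
      = (((n - 4) * t - 12 : ℤ) : ℚ) / (12 : ℤ) := by push_cast; ring
  have hl : -((t : ℚ)/12) + (n - 1) * (1/2 + t/12) - (1/2 + 2*(t/12))
      = (((n - 4) * t + 6 * n - 12 : ℤ) : ℚ) / (12 : ℤ) := by push_cast; ring
  have hm : (n - 1) * (1/2 + 2*((t : ℚ)/12)) = (((n - 1) * (t + 3) : ℤ) : ℚ) / (6 : ℤ) := by
    push_cast; ring
  simp only [hk, hl, hm, exists_intCast_eq_div_iff_dvd (show (12 : ℤ) ≠ 0 by norm_num),
    exists_intCast_eq_div_iff_dvd (show (6 : ℤ) ≠ 0 by norm_num)]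

theorem dvd_conditions_iff (n : ℕ) {t : ℤ} (ht0 : 0 ≤ t) (ht12 : t < 12) :
    (12 ∣ (n - 4) * t - 12 ∧ 12 ∣ (n - 4) * t + 6 * n - 12 ∧ 6 ∣ (n - 1) * (t + 3)) ↔
    (((t = 3 ∨ t = 9) ∧ n % 4 = 0) ∨ ((t = 1 ∨ t = 5 ∨ t = 7 ∨ t = 11) ∧ n % 12 = 4)) := by
  interval_cases t <;> omega

theorem integral_twelfth_iff (n : ℕ) (t : ℤ) (h0 : 0 ≤ (t : ℚ) / 12) (h1 : (t : ℚ) / 12 < 1) :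
    ((∃ k : ℤ, (k : ℚ) = (n - 1) * (t/12) - (1/2 + t/12) - (1/2 + 2*(t/12))) ∧
     (∃ l : ℤ, (l : ℚ) = -(t/12) + (n - 1) * (1/2 + t/12) - (1/2 + 2*(t/12))) ∧
     (∃ m : ℤ, (m : ℚ) = (n - 1) * (1/2 + 2*(t/12)))) ↔
    ((((t : ℚ)/12 = 1/4 ∨ (t : ℚ)/12 = 3/4) ∧ n % 4 = 0) ∨
     (((t : ℚ)/12 = 1/12 ∨ (t : ℚ)/12 = 5/12 ∨ (t : ℚ)/12 = 7/12 ∨ (t : ℚ)/12 = 11/12) ∧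
       n % 12 = 4)) := by
  have ht0 : (0 : ℚ) ≤ t := by linarith
  have ht12 : (t : ℚ) < 12 := by linarith
  have twelfths : ((1 : ℚ)/4 = (3 : ℤ)/12 ∧ (3 : ℚ)/4 = (9 : ℤ)/12) ∧ (1 : ℚ)/12 = (1 : ℤ)/12 ∧
      (5 : ℚ)/12 = (5 : ℤ)/12 ∧ (7 : ℚ)/12 = (7 : ℤ)/12 ∧ (11 : ℚ)/12 = (11 : ℤ)/12 := by
    norm_num
  simp only [twelfths, div_left_inj' (show (12 : ℚ) ≠ 0 by norm_num), Int.cast_inj]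
  rw [integral_iff_dvd, dvd_conditions_iff n (by exact_mod_cast ht0) (by exact_mod_cast ht12)]

theorem regular_vector_case1_general (n : ℕ) (a : ℚ) (h0 : 0 ≤ a) (h1 : a < 1) :
    ((∃ k : ℤ, (k : ℚ) = (n - 1) * a - (1/2 + a) - (1/2 + 2*a)) ∧
     (∃ l : ℤ, (l : ℚ) = -a + (n - 1) * (1/2 + a) - (1/2 + 2*a)) ∧
     (∃ m : ℤ, (m : ℚ) = (n - 1) * (1/2 + 2*a))) ↔
    (((a = 1/4 ∨ a = 3/4) ∧ n % 4 = 0) ∨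
     ((a = 1/12 ∨ a = 5/12 ∨ a = 7/12 ∨ a = 11/12) ∧ n % 12 = 4)) := by
  constructor
  · intro h
    obtain ⟨t, rfl⟩ := exists_eq_intCast_div_twelve h.1 h.2.2
    exact (integral_twelfth_iff n t h0 h1).mp h
  · intro h
    obtain ⟨t, rfl⟩ : ∃ t : ℤ, a = t / 12 := by
      rcases h with ⟨(rfl | rfl), -⟩ | ⟨(rfl | rfl | rfl | rfl), -⟩
      exacts [⟨3, by norm_num⟩, ⟨9, by norm_num⟩, ⟨1, by norm_num⟩, ⟨5, by norm_num⟩,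
        ⟨7, by norm_num⟩, ⟨11, by norm_num⟩]
    exact (integral_twelfth_iff n t h0 h1).mpr h

/-- Integrality of `(a, 1/2 + a, 1/2 + 2a) · B` for `B` with rows
`(n-1,-1,0), (-1,n-1,0), (-1,-1,n-1)`, classified. -/
theorem regular_vector_case1 (n : ℕ) (hn : 3 ≤ n) (a : ℚ) (h0 : 0 ≤ a) (h1 : a < 1) :
    ((∃ k : ℤ, (k : ℚ) = (n - 1) * a - (1/2 + a) - (1/2 + 2*a)) ∧
     (∃ l : ℤ, (l : ℚ) = -a + (n - 1) * (1/2 + a) - (1/2 + 2*a)) ∧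
     (∃ m : ℤ, (m : ℚ) = (n - 1) * (1/2 + 2*a))) ↔
    (((a = 1/4 ∨ a = 3/4) ∧ n % 4 = 0) ∨
     ((a = 1/12 ∨ a = 5/12 ∨ a = 7/12 ∨ a = 11/12) ∧ n % 12 = 4)) :=
  regular_vector_case1_general n a h0 h1
end

section
/- Let n ≥ 3 and let B be the integer matrix with rows (n-1,-1,0), (-1,n-1,0), (-1,-1,n-1). The vector (a, 1/3 + a, 2/3 + a) · B has all entries in ℤ for a rational a ∈ [0,1) if and only if (a = 1/3 and n ≡ 0 mod 3) or (a = 5/6 and n ≡ 3 mod 6). -/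
/-!
The integral combinations `l - k = n / 3` and `m + k - 2 l = 2 a + 1 / 3` of the three entries
force `3 ∣ n` and, as `0 ≤ a < 1`, `a ∈ {1/3, 5/6}`; for `a = 5/6` the first entry
`k = (n - 3) a - 1` gives `6 k = 5 n - 21`, i.e. `n ≡ 3 mod 6`. Conversely, for `n = 3 t`
resp. `n = 6 t + 3` the entries are explicit integers.
-/

lemma eq_one_third_or_eq_five_sixths_of_intCast_eq {a : ℚ} (h0 : 0 ≤ a) (h1 : a < 1) {c : ℤ}
    (hc : (c : ℚ) = 2 * a + 1 / 3) : a = 1 / 3 ∨ a = 5 / 6 := by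
  have hc0 : 0 < c := by exact_mod_cast (by linarith : (0 : ℚ) < c)
  have hc3 : c < 3 := by exact_mod_cast (by linarith : (c : ℚ) < 3)
  obtain rfl | rfl : c = 1 ∨ c = 2 := by omega
  · left; push_cast at hc; linarith
  · right; push_cast at hc; linarith

theorem regular_vector_case2_general (n : ℕ) (a : ℚ) (h0 : 0 ≤ a) (h1 : a < 1) :
    ((∃ k : ℤ, (k : ℚ) = (n - 1) * a - (1/3 + a) - (2/3 + a)) ∧
     (∃ l : ℤ, (l : ℚ) = -a + (n - 1) * (1/3 + a) - (2/3 + a)) ∧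
     (∃ m : ℤ, (m : ℚ) = (n - 1) * (2/3 + a))) ↔
    ((a = 1/3 ∧ n % 3 = 0) ∨ (a = 5/6 ∧ n % 6 = 3)) := by
  constructor
  · rintro ⟨⟨k, hk⟩, ⟨l, hl⟩, ⟨m, hm⟩⟩
    have hn : (n : ℤ) = 3 * (l - k) := by
      exact_mod_cast (by linear_combination 3 * (hk - hl) : (n : ℚ) = 3 * (l - k))
    have hc : ((m + k - 2 * l : ℤ) : ℚ) = 2 * a + 1 / 3 := by
      push_cast; linear_combination hm + hk - 2 * hl
    rcases eq_one_third_or_eq_five_sixths_of_intCast_eq h0 h1 hc with rfl | rfl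
    · exact Or.inl ⟨rfl, by omega⟩
    · have hk6 : 6 * k = 5 * (n : ℤ) - 21 := by
        exact_mod_cast (by linear_combination 6 * hk : 6 * (k : ℚ) = 5 * n - 21)
      exact Or.inr ⟨rfl, by omega⟩
  · rintro (⟨rfl, hn⟩ | ⟨rfl, hn⟩)
    · obtain ⟨t, rfl⟩ : ∃ t, n = 3 * t := ⟨n / 3, by omega⟩
      refine ⟨⟨t - 2, ?_⟩, ⟨2 * t - 2, ?_⟩, ⟨3 * t - 1, ?_⟩⟩ <;> push_cast <;> ring
    · obtain ⟨t, rfl⟩ : ∃ t, n = 6 * t + 3 := ⟨n / 6, by omega⟩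
      refine ⟨⟨5 * t - 1, ?_⟩, ⟨7 * t, ?_⟩, ⟨9 * t + 3, ?_⟩⟩ <;> push_cast <;> ring

/-- Integrality of `(a, 1/3 + a, 2/3 + a) · B` for `B` with rows
`(n-1,-1,0), (-1,n-1,0), (-1,-1,n-1)`, classified. -/
theorem regular_vector_case2 (n : ℕ) (hn : 3 ≤ n) (a : ℚ) (h0 : 0 ≤ a) (h1 : a < 1) :
    ((∃ k : ℤ, (k : ℚ) = (n - 1) * a - (1/3 + a) - (2/3 + a)) ∧
     (∃ l : ℤ, (l : ℚ) = -a + (n - 1) * (1/3 + a) - (2/3 + a)) ∧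
     (∃ m : ℤ, (m : ℚ) = (n - 1) * (2/3 + a))) ↔
    ((a = 1/3 ∧ n % 3 = 0) ∨ (a = 5/6 ∧ n % 6 = 3)) :=
  regular_vector_case2_general n a h0 h1
end

section
/- Let n ≥ 3 and let B be the integer matrix with rows (n-1, 0, -1), (-1, n-1, -1), (-1, 0, n-1). The vector (a, 1/2 + a, 1/2 + 2a) · B has all entries in ℤ for rational a ∈ [0,1) if and only if a = 1/2 and n is even. -/
/-!
The third entry minus the first two is `a + 1/2`, an integer in `[1/2, 3/2)`, so `a = 1/2`.
Then the first entry is `n/2 - 3`, which is an integer exactly when `n` is even.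
-/

lemma eq_half_of_intCast_eq_add_half {a : ℚ} (h0 : 0 ≤ a) (h1 : a < 1) {j : ℤ}
    (hj : (j : ℚ) = a + 1/2) : a = 1/2 := by
  have hpos : (0 : ℚ) < j := by linarith
  have hlt : (j : ℚ) < 2 := by linarith
  have hj1 : j = 1 := by
    have : 0 < j := by exact_mod_cast hpos
    have : j < 2 := by exact_mod_cast hlt
    omega
  rw [hj1, Int.cast_one] at hj
  linarith

lemma even_of_half_eq_intCast {n : ℕ} {k : ℤ} (h : (n : ℚ) / 2 = k) : Even n := by
  have hn : (n : ℤ) = k + k := by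
    have : (n : ℚ) = k + k := by linarith
    exact_mod_cast this
  exact Int.even_coe_nat n |>.mp ⟨k, hn⟩

theorem permuted_vector_case_general (n : ℕ) (a : ℚ) (h0 : 0 ≤ a) (h1 : a < 1) :
    ((∃ k : ℤ, (k : ℚ) = (n - 1) * a - (1/2 + a) - (1/2 + 2*a)) ∧
     (∃ l : ℤ, (l : ℚ) = (n - 1) * (1/2 + a)) ∧
     (∃ m : ℤ, (m : ℚ) = -a - (1/2 + a) + (n - 1) * (1/2 + 2*a))) ↔
    (a = 1/2 ∧ Even n) := by
  constructor
  · rintro ⟨⟨k, hk⟩, ⟨l, hl⟩, ⟨m, hm⟩⟩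
    have ha : a = 1/2 :=
      eq_half_of_intCast_eq_add_half h0 h1 (j := m - k - l) (by push_cast; rw [hk, hl, hm]; ring)
    subst ha
    exact ⟨rfl, even_of_half_eq_intCast (k := k + 3) (by push_cast; linarith)⟩
  · rintro ⟨rfl, t, rfl⟩
    refine ⟨⟨t - 3, ?_⟩, ⟨2 * t - 1, ?_⟩, ⟨3 * t - 3, ?_⟩⟩ <;> push_cast <;> ring

/-- Integrality of `(a, 1/2 + a, 1/2 + 2a) · B` for `B` with rows
`(n-1,0,-1), (-1,n-1,-1), (-1,0,n-1)`, classified. -/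
theorem permuted_vector_case (n : ℕ) (hn : 3 ≤ n) (a : ℚ) (h0 : 0 ≤ a) (h1 : a < 1) :
    ((∃ k : ℤ, (k : ℚ) = (n - 1) * a - (1/2 + a) - (1/2 + 2*a)) ∧
     (∃ l : ℤ, (l : ℚ) = (n - 1) * (1/2 + a)) ∧
     (∃ m : ℤ, (m : ℚ) = -a - (1/2 + a) + (n - 1) * (1/2 + 2*a))) ↔
    (a = 1/2 ∧ Even n) :=
  permuted_vector_case_general n a h0 h1
end

section
/- Let n ≥ 3 and let B be the integer matrix with rows (n, 0, 0), (0, n-1, 1), (1, 0, n-2). Then there is no rational a ∈ [0,1) such that all entries of (a, 1/2 + a, 1/2 + 2a) · B are integers. -/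
/-!
From the entries `k, l, m` one reads off the integer `s = 4l - 2m - n + 1 = 2a`, and then
`2k = (n + 2)s + 1` and `2m = n - 1 + (2n - 3)s`. Modulo 2 these say `ns = 1` and `n + s = 1`,
which is impossible.
-/

theorem Int.false_of_two_mul_eq_of_two_mul_eq (n s k m : ℤ) (hk : 2 * k = (n + 2) * s + 1)
    (hm : 2 * m = n - 1 + (2 * n - 3) * s) : False := by
  have hk₂ := congrArg (Int.cast : ℤ → ZMod 2) hk
  have hm₂ := congrArg (Int.cast : ℤ → ZMod 2) hm
  push_cast at hk₂ hm₂
  generalize (n : ZMod 2) = x, (s : ZMod 2) = y, (k : ZMod 2) = u, (m : ZMod 2) = v at hk₂ hm₂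
  revert x y u v
  decide

theorem false_of_entries_integral (n : ℤ) (a : ℚ) (k l m : ℤ)
    (hk : (k : ℚ) = n * a + (1 / 2 + 2 * a)) (hl : (l : ℚ) = (n - 1) * (1 / 2 + a))
    (hm : (m : ℚ) = (1 / 2 + a) + (n - 2) * (1 / 2 + 2 * a)) : False := by
  have h2k : ((2 * k : ℤ) : ℚ) = (((n + 2) * (4 * l - 2 * m - n + 1) + 1 : ℤ) : ℚ) := by
    push_cast
    linear_combination 2 * hk - (n + 2) * (4 * hl - 2 * hm)
  have h2m : ((2 * m : ℤ) : ℚ) = ((n - 1 + (2 * n - 3) * (4 * l - 2 * m - n + 1) : ℤ) : ℚ) := by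
    push_cast
    linear_combination 2 * hm - (2 * n - 3) * (4 * hl - 2 * hm)
  exact Int.false_of_two_mul_eq_of_two_mul_eq n _ k m (Int.cast_injective h2k)
    (Int.cast_injective h2m)

theorem permuted_vector_no_solution_general (n : ℕ) :
    ¬ ∃ a : ℚ, 0 ≤ a ∧ a < 1 ∧
      (∃ k : ℤ, (k : ℚ) = n * a + (1/2 + 2*a)) ∧
      (∃ l : ℤ, (l : ℚ) = (n - 1) * (1/2 + a)) ∧
      (∃ m : ℤ, (m : ℚ) = (1/2 + a) + (n - 2) * (1/2 + 2*a)) := by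
  rintro ⟨a, -, -, ⟨k, hk⟩, ⟨l, hl⟩, ⟨m, hm⟩⟩
  exact false_of_entries_integral n a k l m (by exact_mod_cast hk) (by exact_mod_cast hl)
    (by exact_mod_cast hm)

/-- For `B` with rows `(n,0,0), (0,n-1,1), (1,0,n-2)`, the vector
`(a, 1/2 + a, 1/2 + 2a) · B` is never integral. -/
theorem permuted_vector_no_solution (n : ℕ) (hn : 3 ≤ n) :
    ¬ ∃ a : ℚ, 0 ≤ a ∧ a < 1 ∧
      (∃ k : ℤ, (k : ℚ) = n * a + (1/2 + 2*a)) ∧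
      (∃ l : ℤ, (l : ℚ) = (n - 1) * (1/2 + a)) ∧
      (∃ m : ℤ, (m : ℚ) = (1/2 + a) + (n - 2) * (1/2 + 2*a)) :=
  permuted_vector_no_solution_general n
end

section
/- Let n ≥ 6 and consider the surface S: X^{n-2}M_x + Y^{n-2}M_y + Z^{n-2}M_z + U^{n-2}M_u = 0 with M_x ∈ {X^2, XU} and M_u ∈ {U^2, XU}. Then every point of the form P = (η : 0 : 0 : 1) on S with η ≠ 0 is a nonsingular point of S. -/
/-!
The summands `Yⁿ⁻² M_y` and `Zⁿ⁻² M_z` vanish to order `n - 2 ≥ 2` at `P = (η : 0 : 0 : 1)`, so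
neither they nor their first partial derivatives contribute at `P`, and only the binary form
`Xⁿ⁻² M_x + Uⁿ⁻² M_u` matters. In three of its four shapes one partial derivative at `P` is a
nonzero multiple of a power of `η`. For `M_x = M_u = XU`, lying on `S` forces `ηⁿ⁻² = -1`, and then
`∂F/∂X (P) = (n - 1) ηⁿ⁻² + 1 = 2 - n ≠ 0`.
-/

open MvPolynomial

section
variable {σ R : Type*} [CommRing R]

theorem eval_pderiv_X_pow_mul_eq_zero {v : σ → R} {i : σ} (hv : v i = 0) {m : ℕ} (hm : 2 ≤ m)
    (g : MvPolynomial σ R) (j : σ) : eval v (pderiv j (X i ^ m * g)) = 0 := by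
  obtain ⟨k, rfl⟩ := Nat.exists_eq_add_of_le' hm
  simp [pow_add, mul_assoc, hv]

end

section
variable {σ K : Type*} [Field K] [CharZero K] {x u : σ} {v : σ → K} {m : ℕ}

theorem exists_eval_pderiv_X_pow_mul_add_X_pow_mul_ne_zero (hxu : x ≠ u) (hvx : v x ≠ 0)
    (hvu : v u = 1) (hm : m ≠ 0) {Mx Mu : MvPolynomial σ K}
    (hMx : Mx = X x ^ 2 ∨ Mx = X x * X u) (hMu : Mu = X u ^ 2 ∨ Mu = X x * X u)
    (hG : eval v (X x ^ m * Mx + X u ^ m * Mu) = 0) :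
    ∃ j, eval v (pderiv j (X x ^ m * Mx + X u ^ m * Mu)) ≠ 0 := by
  obtain ⟨k, rfl⟩ := Nat.exists_eq_add_one_of_ne_zero hm
  have hcast (c : ℕ) : (k + c + 1 : K) ≠ 0 := by exact_mod_cast (k + c).succ_ne_zero
  rcases hMx with rfl | rfl <;> rcases hMu with rfl | rfl
  · refine ⟨x, fun h ↦ mul_ne_zero (hcast 2) (pow_ne_zero (k + 2) hvx) ?_⟩
    simp [hxu.symm] at h
    linear_combination h
  · refine ⟨u, fun h ↦ mul_ne_zero (hcast 1) hvx ?_⟩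
    simp [hxu, hvu] at h
    linear_combination h
  · refine ⟨x, fun h ↦ mul_ne_zero (hcast 1) (pow_ne_zero (k + 1) hvx) ?_⟩
    simp [hxu.symm, hvu] at h
    linear_combination h
  · have hpow : v x ^ (k + 1) = -1 := by
      simp only [map_add, map_mul, map_pow, eval_X, hvu] at hG
      exact mul_left_cancel₀ hvx (by linear_combination hG)
    refine ⟨x, fun h ↦ hcast 0 ?_⟩
    simp [hxu.symm, hvu] at h
    linear_combination -h + (k + 2) * hpow

end

theorem point_eta_nonsingular_general
    (n : ℕ) (hn : 6 ≤ n)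
    (Mx My Mz Mu : MvPolynomial (Fin 4) ℂ)
    (hMx : Mx = X 0 ^ 2 ∨ Mx = X 0 * X 3)
    (hMu : Mu = X 3 ^ 2 ∨ Mu = X 0 * X 3)
    (F : MvPolynomial (Fin 4) ℂ)
    (hF : F = X 0 ^ (n - 2) * Mx + X 1 ^ (n - 2) * My + X 2 ^ (n - 2) * Mz +
      X 3 ^ (n - 2) * Mu)
    (η : ℂ) (hη : η ≠ 0)
    (honS : eval ![η, 0, 0, 1] F = 0) :
    ∃ j, eval ![η, 0, 0, 1] (pderiv j F) ≠ 0 := by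
  have hm : 2 ≤ n - 2 := by omega
  have hY := eval_pderiv_X_pow_mul_eq_zero (v := ![η, 0, 0, 1]) (i := 1) rfl hm My
  have hZ := eval_pderiv_X_pow_mul_eq_zero (v := ![η, 0, 0, 1]) (i := 2) rfl hm Mz
  have hG : eval ![η, 0, 0, 1] (X 0 ^ (n - 2) * Mx + X 3 ^ (n - 2) * Mu) = 0 := by
    rw [hF] at honS
    simpa [zero_pow (by omega : n - 2 ≠ 0)] using honS
  obtain ⟨j, hj⟩ := exists_eval_pderiv_X_pow_mul_add_X_pow_mul_ne_zero (x := 0) (u := 3)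
    (by simp) hη rfl (by omega) hMx hMu hG
  exact ⟨j, by simpa only [hF, map_add, hY, hZ, add_zero] using hj⟩

/-- If `Mx ∈ {X², XU}` and `Mu ∈ {U², XU}`, then every point `(η : 0 : 0 : 1)` with
`η ≠ 0` lying on the surface `F = Xⁿ⁻²Mx + Yⁿ⁻²My + Zⁿ⁻²Mz + Uⁿ⁻²Mu` is a
nonsingular point of the surface. -/
theorem point_eta_nonsingular
    (n : ℕ) (hn : 6 ≤ n)
    (Mx My Mz Mu : MvPolynomial (Fin 4) ℂ)
    (hMx : Mx = X 0 ^ 2 ∨ Mx = X 0 * X 3)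
    (hMu : Mu = X 3 ^ 2 ∨ Mu = X 0 * X 3)
    (hMy : ∃ d : Fin 4 →₀ ℕ, My = monomial d 1 ∧ d.sum (fun _ k => k) = 2)
    (hMz : ∃ d : Fin 4 →₀ ℕ, Mz = monomial d 1 ∧ d.sum (fun _ k => k) = 2)
    (F : MvPolynomial (Fin 4) ℂ)
    (hF : F = X 0 ^ (n - 2) * Mx + X 1 ^ (n - 2) * My + X 2 ^ (n - 2) * Mz +
      X 3 ^ (n - 2) * Mu)
    (η : ℂ) (hη : η ≠ 0)
    (honS : eval ![η, 0, 0, 1] F = 0) :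
    ∃ j, eval ![η, 0, 0, 1] (pderiv j F) ≠ 0 :=
  point_eta_nonsingular_general n hn Mx My Mz Mu hMx hMu F hF η hη honS
end
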